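/- arXiv:2204.06645 — 6 statements merged into one kernel-verified Lean document; each statement's English description precedes it below -/
import Mathlib

section
/- Let μ₀ ∈ 𝕎₂(ℝ^m) be absolutely continuous with respect to Lebesgue measure, and let θ, θ' ∈ ℝ^m have strictly positive entries θ₁,…,θ_m and θ'₁,…,θ'_m. Let μ_θ and μ_{θ'} be the dilations of μ₀ by θ and θ' respectively. Then W₂(μ_θ, μ_{θ'})² = Σ_{i=1}^m |θᵢ − θ'ᵢ|² ∫_{ℝ^m} |xᵢ|² dμ₀(x). -/
open MeasureTheory Filter Set
open scoped ENNReal NNReal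

noncomputable section

/-- The 2-Wasserstein distance between two measures on `ℝ^m`, defined as the infimum
over all couplings (probability measures on the product whose marginals are `μ` and `ν`)
of the square root of the quadratic transport cost. -/
noncomputable def W2 {m : ℕ} (μ ν : Measure (EuclideanSpace ℝ (Fin m))) : ℝ≥0∞ :=
  ⨅ (γ : Measure (EuclideanSpace ℝ (Fin m) × EuclideanSpace ℝ (Fin m)))
    (_ : IsProbabilityMeasure γ) (_ : γ.map Prod.fst = μ) (_ : γ.map Prod.snd = ν),
    (∫⁻ p, ENNReal.ofReal (‖p.1 - p.2‖ ^ 2) ∂γ) ^ (1 / 2 : ℝ)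

/-- A measure has finite second moment if `∫ |x|² dμ < ∞`. -/
def FiniteSecondMoment {m : ℕ} (μ : Measure (EuclideanSpace ℝ (Fin m))) : Prop :=
  ∫⁻ x, ENNReal.ofReal (‖x‖ ^ 2) ∂μ ≠ ⊤

/-- The dilation of a measure `μ` by `θ ∈ ℝ^m_+`: the pushforward of `μ` under the linear
map `x ↦ (θ₁x₁, …, θ_m x_m)`. -/
noncomputable def dilate {m : ℕ} (θ : Fin m → ℝ)
    (μ : Measure (EuclideanSpace ℝ (Fin m))) : Measure (EuclideanSpace ℝ (Fin m)) :=
  μ.map (fun x => WithLp.toLp 2 (fun i => θ i * x i))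

/-! The synchronous coupling `x ↦ (θ ⊙ x, θ' ⊙ x)` of `μ_θ` and `μ_θ'` has cost
`∑ᵢ (θᵢ - θ'ᵢ)² ‖xᵢ‖²`, norms taken in `L²(μ₀)`. The cost of an arbitrary coupling `γ` splits over
coordinates as `∑ᵢ ‖pᵢ - qᵢ‖²` in `L²(γ)`, and since the marginals are dilations of `μ₀` we have
`‖pᵢ‖ = θᵢ ‖xᵢ‖` and `‖qᵢ‖ = θ'ᵢ ‖xᵢ‖`; the reverse triangle inequality in `L²(γ)` then bounds
each term below by `(θᵢ - θ'ᵢ)² ‖xᵢ‖²`. Hence the synchronous coupling is optimal. -/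

open ENNReal

lemma eLpNorm_two_sq_eq_lintegral {α E : Type*} [MeasurableSpace α] [NormedAddCommGroup E]
    (f : α → E) (μ : Measure α) : eLpNorm f 2 μ ^ 2 = ∫⁻ a, ‖f a‖ₑ ^ 2 ∂μ := by
  simpa using eLpNorm_nnreal_pow_eq_lintegral (f := f) (μ := μ) (p := 2) two_ne_zero

lemma lintegral_ofReal_norm_sq_eq_sum_eLpNorm_sq {ι α : Type*} [Fintype ι] [MeasurableSpace α]
    {μ : Measure α} {f : α → EuclideanSpace ℝ ι} (hf : AEMeasurable f μ) :
    ∫⁻ a, ENNReal.ofReal (‖f a‖ ^ 2) ∂μ = ∑ i, eLpNorm (fun a => f a i) 2 μ ^ 2 := by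
  have hcoord (i : ι) : AEMeasurable (fun a => ‖f a i‖ₑ ^ 2) μ :=
    ((EuclideanSpace.proj i).continuous.measurable.comp_aemeasurable hf).enorm.pow_const 2
  have hpt (a : α) : ENNReal.ofReal (‖f a‖ ^ 2) = ∑ i, ‖f a i‖ₑ ^ 2 := by
    simp_rw [EuclideanSpace.norm_sq_eq, ofReal_sum_of_nonneg (fun i _ => sq_nonneg _),
      ofReal_pow (norm_nonneg _), ofReal_norm]
  simp_rw [hpt, lintegral_finsetSum' _ fun i _ => hcoord i]
  refine Finset.sum_congr rfl fun i _ => ?_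
  exact (eLpNorm_two_sq_eq_lintegral _ μ).symm

lemma eLpNorm_sq_eq_ofReal_integral_sq {α : Type*} [MeasurableSpace α] {μ : Measure α}
    {f : α → ℝ} (hf : MemLp f 2 μ) :
    eLpNorm f 2 μ ^ 2 = ENNReal.ofReal (∫ a, f a ^ 2 ∂μ) := by
  rw [eLpNorm_two_sq_eq_lintegral,
    ofReal_integral_eq_lintegral_ofReal hf.integrable_sq (ae_of_all _ fun a => sq_nonneg _)]
  refine lintegral_congr fun a => ?_
  rw [← sq_abs, ofReal_pow (abs_nonneg _), Real.enorm_eq_ofReal_abs]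

lemma ofReal_abs_sub_mul_le_eLpNorm_sub {α E : Type*} [MeasurableSpace α] [NormedAddCommGroup E]
    {μ : Measure α} {p : ℝ≥0∞} (hp : 1 ≤ p) {f g : α → E} (hf : AEStronglyMeasurable f μ)
    (hg : AEStronglyMeasurable g μ) {s t : ℝ} (hs : 0 ≤ s) (ht : 0 ≤ t) {N : ℝ≥0∞} (hN : N ≠ ∞)
    (hfN : eLpNorm f p μ = ENNReal.ofReal s * N) (hgN : eLpNorm g p μ = ENNReal.ofReal t * N) :
    ENNReal.ofReal |s - t| * N ≤ eLpNorm (f - g) p μ := by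
  wlog hts : t ≤ s generalizing f g s t
  · rw [abs_sub_comm, eLpNorm_sub_comm]
    exact this hg hf ht hs hgN hfN (le_of_not_ge hts)
  rw [abs_of_nonneg (sub_nonneg.2 hts), ofReal_sub _ ht, ENNReal.sub_mul fun _ _ => hN, ← hfN,
    ← hgN, tsub_le_iff_right]
  calc eLpNorm f p μ = eLpNorm (f - g + g) p μ := by rw [sub_add_cancel]
    _ ≤ eLpNorm (f - g) p μ + eLpNorm g p μ := eLpNorm_add_le (hf.sub hg) hg hp

section

variable {m : ℕ}

lemma W2_sq_eq_of_optimal_coupling {μ ν : Measure (EuclideanSpace ℝ (Fin m))} {C : ℝ≥0∞}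
    (γ₀ : Measure (EuclideanSpace ℝ (Fin m) × EuclideanSpace ℝ (Fin m))) [IsProbabilityMeasure γ₀]
    (h₁ : γ₀.map Prod.fst = μ) (h₂ : γ₀.map Prod.snd = ν)
    (hγ₀ : ∫⁻ p, ENNReal.ofReal (‖p.1 - p.2‖ ^ 2) ∂γ₀ ≤ C)
    (hC : ∀ γ : Measure (EuclideanSpace ℝ (Fin m) × EuclideanSpace ℝ (Fin m)),
      IsProbabilityMeasure γ → γ.map Prod.fst = μ → γ.map Prod.snd = ν →
        C ≤ ∫⁻ p, ENNReal.ofReal (‖p.1 - p.2‖ ^ 2) ∂γ) :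
    W2 μ ν ^ 2 = C := by
  have hW : W2 μ ν = C ^ (1 / 2 : ℝ) := by
    refine le_antisymm ?_ ?_
    · exact iInf₂_le_of_le γ₀ ‹_› <| iInf₂_le_of_le h₁ h₂ <| rpow_le_rpow hγ₀ (by norm_num)
    · exact le_iInf₂ fun γ hγ => le_iInf₂ fun h₁ h₂ => rpow_le_rpow (hC γ hγ h₁ h₂) (by norm_num)
  rw [hW, ← rpow_natCast, ← rpow_mul]
  norm_num

def dilation (θ : Fin m → ℝ) (x : EuclideanSpace ℝ (Fin m)) : EuclideanSpace ℝ (Fin m) :=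
  WithLp.toLp 2 fun i => θ i * x i

lemma measurable_dilation (θ : Fin m → ℝ) : Measurable (dilation θ) := by
  unfold dilation
  fun_prop

lemma dilate_eq_map_dilation (θ : Fin m → ℝ) (μ : Measure (EuclideanSpace ℝ (Fin m))) :
    dilate θ μ = μ.map (dilation θ) := rfl

lemma eLpNorm_coord_dilate (θ : Fin m → ℝ) (μ : Measure (EuclideanSpace ℝ (Fin m))) (i : Fin m)
    (p : ℝ≥0∞) :
    eLpNorm (fun x : EuclideanSpace ℝ (Fin m) => x i) p (dilate θ μ) =
      ‖θ i‖ₑ * eLpNorm (fun x : EuclideanSpace ℝ (Fin m) => x i) p μ := by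
  rw [dilate_eq_map_dilation,
    eLpNorm_map_measure (by fun_prop) (measurable_dilation θ).aemeasurable]
  exact eLpNorm_const_smul (θ i) (fun x : EuclideanSpace ℝ (Fin m) => x i) p μ

lemma eLpNorm_coord_sub_map_dilation_prod (θ θ' : Fin m → ℝ)
    (μ : Measure (EuclideanSpace ℝ (Fin m))) (i : Fin m) (p : ℝ≥0∞) :
    eLpNorm (fun q : EuclideanSpace ℝ (Fin m) × EuclideanSpace ℝ (Fin m) => q.1 i - q.2 i) p
        (μ.map fun x => (dilation θ x, dilation θ' x)) =
      ‖θ i - θ' i‖ₑ * eLpNorm (fun x : EuclideanSpace ℝ (Fin m) => x i) p μ := by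
  rw [eLpNorm_map_measure (by fun_prop)
    ((measurable_dilation θ).prodMk (measurable_dilation θ')).aemeasurable, ← eLpNorm_const_smul]
  congr 1
  ext x
  simp only [dilation, Function.comp_apply, Pi.smul_apply, smul_eq_mul]
  ring

lemma ofReal_abs_sub_mul_eLpNorm_coord_le_of_coupling {θ θ' : Fin m → ℝ}
    {μ : Measure (EuclideanSpace ℝ (Fin m))}
    {γ : Measure (EuclideanSpace ℝ (Fin m) × EuclideanSpace ℝ (Fin m))}
    (h₁ : γ.map Prod.fst = dilate θ μ) (h₂ : γ.map Prod.snd = dilate θ' μ)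
    {p : ℝ≥0∞} (hp : 1 ≤ p) {i : Fin m} (hθ : 0 ≤ θ i) (hθ' : 0 ≤ θ' i)
    (hN : eLpNorm (fun x : EuclideanSpace ℝ (Fin m) => x i) p μ ≠ ∞) :
    ENNReal.ofReal |θ i - θ' i| * eLpNorm (fun x : EuclideanSpace ℝ (Fin m) => x i) p μ ≤
      eLpNorm (fun q : EuclideanSpace ℝ (Fin m) × EuclideanSpace ℝ (Fin m) => q.1 i - q.2 i) p
        γ := by
  have hmarginal
      {π : EuclideanSpace ℝ (Fin m) × EuclideanSpace ℝ (Fin m) → EuclideanSpace ℝ (Fin m)}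
      (hπ : Measurable π) {φ : Fin m → ℝ} (hφ : 0 ≤ φ i) (h : γ.map π = dilate φ μ) :
      eLpNorm (fun q => π q i) p γ =
        ENNReal.ofReal (φ i) * eLpNorm (fun x : EuclideanSpace ℝ (Fin m) => x i) p μ := by
    rw [← Real.enorm_eq_ofReal hφ, ← eLpNorm_coord_dilate, ← h,
      eLpNorm_map_measure (by fun_prop) hπ.aemeasurable]
    rfl
  exact ofReal_abs_sub_mul_le_eLpNorm_sub hp (by fun_prop) (by fun_prop) hθ hθ' hN
    (hmarginal measurable_fst hθ h₁) (hmarginal measurable_snd hθ' h₂)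

lemma FiniteSecondMoment.memLp_coord {μ : Measure (EuclideanSpace ℝ (Fin m))}
    (hμ : FiniteSecondMoment μ) (i : Fin m) :
    MemLp (fun x : EuclideanSpace ℝ (Fin m) => x i) 2 μ := by
  rw [FiniteSecondMoment,
    lintegral_ofReal_norm_sq_eq_sum_eLpNorm_sq (f := fun x => x) aemeasurable_id', sum_ne_top] at hμ
  exact ⟨by fun_prop,
    lt_top_iff_ne_top.2 ((pow_ne_top_iff.1 (hμ i (Finset.mem_univ i))).resolve_right two_ne_zero)⟩

end

theorem wasserstein_dilation_ac_general {m : ℕ}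
    (μ₀ : Measure (EuclideanSpace ℝ (Fin m))) [IsProbabilityMeasure μ₀]
    (hmom : FiniteSecondMoment μ₀)
    (θ θ' : Fin m → ℝ) (hθ : ∀ i, 0 < θ i) (hθ' : ∀ i, 0 < θ' i) :
    (W2 (dilate θ μ₀) (dilate θ' μ₀)) ^ 2 =
      ENNReal.ofReal (∑ i, |θ i - θ' i| ^ 2 * ∫ x, (x i) ^ 2 ∂μ₀) := by
  set N := fun i => eLpNorm (fun x : EuclideanSpace ℝ (Fin m) => x i) 2 μ₀
  have hcost (γ : Measure (EuclideanSpace ℝ (Fin m) × EuclideanSpace ℝ (Fin m))) :=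
    lintegral_ofReal_norm_sq_eq_sum_eLpNorm_sq (μ := γ) (f := fun q => q.1 - q.2) (by fun_prop)
  have hsync : Measurable fun x => (dilation θ x, dilation θ' x) :=
    (measurable_dilation θ).prodMk (measurable_dilation θ')
  have := Measure.isProbabilityMeasure_map (μ := μ₀) hsync.aemeasurable
  have hW2 :
      W2 (dilate θ μ₀) (dilate θ' μ₀) ^ 2 = ∑ i, (ENNReal.ofReal |θ i - θ' i| * N i) ^ 2 := by
    refine W2_sq_eq_of_optimal_coupling (μ₀.map fun x => (dilation θ x, dilation θ' x))
      (Measure.fst_map_prodMk (measurable_dilation θ'))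
      (Measure.snd_map_prodMk (measurable_dilation θ)) ?upper ?lower
    case upper =>
      rw [hcost]
      refine (Finset.sum_congr rfl fun i _ => ?_).le
      rw [← Real.enorm_eq_ofReal_abs]
      exact congrArg (· ^ 2) (eLpNorm_coord_sub_map_dilation_prod θ θ' μ₀ i 2)
    case lower =>
      intro γ _ h₁ h₂
      rw [hcost]
      exact Finset.sum_le_sum fun i _ => pow_le_pow_left₀ zero_le
        (ofReal_abs_sub_mul_eLpNorm_coord_le_of_coupling h₁ h₂ one_le_two (hθ i).le (hθ' i).le
          (hmom.memLp_coord i).eLpNorm_ne_top) 2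
  rw [hW2, ofReal_sum_of_nonneg fun i _ => by positivity]
  refine Finset.sum_congr rfl fun i _ => ?_
  rw [ofReal_mul (by positivity), ← eLpNorm_sq_eq_ofReal_integral_sq (hmom.memLp_coord i),
    ofReal_pow (abs_nonneg _), mul_pow]

/-- For absolutely continuous `μ₀ ∈ 𝕎₂(ℝ^m)` and `θ, θ'` with strictly positive
entries, `W₂(μ_θ, μ_{θ'})² = Σᵢ |θᵢ − θ'ᵢ|² ∫ |xᵢ|² dμ₀(x)`. -/
theorem wasserstein_dilation_ac {m : ℕ}
    (μ₀ : Measure (EuclideanSpace ℝ (Fin m))) [IsProbabilityMeasure μ₀]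
    (hac : μ₀ ≪ volume) (hmom : FiniteSecondMoment μ₀)
    (θ θ' : Fin m → ℝ) (hθ : ∀ i, 0 < θ i) (hθ' : ∀ i, 0 < θ' i) :
    (W2 (dilate θ μ₀) (dilate θ' μ₀)) ^ 2 =
      ENNReal.ofReal (∑ i, |θ i - θ' i| ^ 2 * ∫ x, (x i) ^ 2 ∂μ₀) :=
  wasserstein_dilation_ac_general μ₀ hmom θ θ' hθ hθ'
end
end

section
/- Let ν₀ ∈ 𝕎₂(ℝ^m) be an arbitrary (not necessarily absolutely continuous) probability measure with finite second moment, and let θ, θ' ∈ ℝ^m have strictly positive entries. Let ν_θ and ν_{θ'} be the dilations of ν₀ by θ and θ' respectively. Then W₂(ν_θ, ν_{θ'})² = Σ_{i=1}^m |θᵢ − θ'ᵢ|² ∫_{ℝ^m} |xᵢ|² dν₀(x). -/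
open MeasureTheory Filter Set
open scoped ENNReal NNReal

noncomputable section

/-! The coupling `x ↦ (θ x, θ' x)` of `ν₀` has cost `∑ᵢ (θᵢ - θ'ᵢ)² ∫ xᵢ² dν₀`. For the lower
bound, the potentials `φ x = ∑ᵢ (1 - θ'ᵢ/θᵢ) xᵢ²` and `ψ y = ∑ᵢ (1 - θᵢ/θ'ᵢ) yᵢ²` satisfy
`φ x + ψ y ≤ ‖x - y‖²` coordinatewise by AM-GM, and since the second moments of the marginals
`ν_θ, ν_θ'` are `θᵢ² ∫ xᵢ² dν₀` and `θ'ᵢ² ∫ xᵢ² dν₀`, integrating `φ ⊕ ψ` against any coupling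
gives the same value `∑ᵢ (θᵢ - θ'ᵢ)² ∫ xᵢ² dν₀`. -/

theorem ofReal_integral_le_lintegral_ofReal {α : Type*} [MeasurableSpace α]
    {μ : Measure α} (f : α → ℝ) :
    ENNReal.ofReal (∫ x, f x ∂μ) ≤ ∫⁻ x, ENNReal.ofReal (f x) ∂μ := by
  by_cases hf : Integrable f μ
  · calc ENNReal.ofReal (∫ x, f x ∂μ)
        ≤ ENNReal.ofReal (∫⁻ x, ENNReal.ofReal (f x) ∂μ).toReal := by
          rw [integral_eq_lintegral_pos_part_sub_lintegral_neg_part hf]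
          exact ENNReal.ofReal_le_ofReal (sub_le_self _ ENNReal.toReal_nonneg)
      _ ≤ ∫⁻ x, ENNReal.ofReal (f x) ∂μ := ENNReal.ofReal_toReal_le
  · simp [integral_undef hf]

/-- Weak Kantorovich duality. -/
theorem ofReal_integral_add_integral_le_lintegral_cost {α β : Type*} [MeasurableSpace α]
    [MeasurableSpace β] {γ : Measure (α × β)} {μ : Measure α} {ν : Measure β}
    (hγμ : γ.map Prod.fst = μ) (hγν : γ.map Prod.snd = ν) {φ : α → ℝ} {ψ : β → ℝ}
    {c : α × β → ℝ} (hφ : Integrable φ μ) (hψ : Integrable ψ ν)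
    (hc : ∀ x y, φ x + ψ y ≤ c (x, y)) :
    ENNReal.ofReal (∫ x, φ x ∂μ + ∫ y, ψ y ∂ν) ≤ ∫⁻ p, ENNReal.ofReal (c p) ∂γ := by
  subst hγμ hγν
  have hφγ : Integrable (fun p : α × β => φ p.1) γ :=
    (integrable_map_measure hφ.1 measurable_fst.aemeasurable).mp hφ
  have hψγ : Integrable (fun p : α × β => ψ p.2) γ :=
    (integrable_map_measure hψ.1 measurable_snd.aemeasurable).mp hψ
  rw [integral_map measurable_fst.aemeasurable hφ.1,
    integral_map measurable_snd.aemeasurable hψ.1, ← integral_add hφγ hψγ]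
  exact (ofReal_integral_le_lintegral_ofReal _).trans
    (lintegral_mono fun p => ENNReal.ofReal_le_ofReal (hc p.1 p.2))

theorem sq_W2 {m : ℕ} (μ ν : Measure (EuclideanSpace ℝ (Fin m))) :
    W2 μ ν ^ 2 =
      ⨅ (γ : Measure (EuclideanSpace ℝ (Fin m) × EuclideanSpace ℝ (Fin m)))
        (_ : IsProbabilityMeasure γ) (_ : γ.map Prod.fst = μ) (_ : γ.map Prod.snd = ν),
        ∫⁻ p, ENNReal.ofReal (‖p.1 - p.2‖ ^ 2) ∂γ := by
  have hsq : ∀ a : ℝ≥0∞, a ^ 2 = ENNReal.orderIsoRpow 2 two_pos a := fun a => by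
    rw [ENNReal.orderIsoRpow_apply, ← ENNReal.rpow_natCast, Nat.cast_ofNat]
  rw [W2, hsq]
  simp only [OrderIso.map_iInf, ENNReal.orderIsoRpow_apply, ← ENNReal.rpow_mul]
  norm_num

/-- For `s, t > 0`, this is `(t u - s v)² ≥ 0` divided by `s t`. -/
theorem one_sub_div_mul_sq_add_le_sq_sub {s t : ℝ} (hs : 0 < s) (ht : 0 < t) (u v : ℝ) :
    (1 - t / s) * u ^ 2 + (1 - s / t) * v ^ 2 ≤ (u - v) ^ 2 := by
  have hsq : (u - v) ^ 2 - ((1 - t / s) * u ^ 2 + (1 - s / t) * v ^ 2) =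
      (t * u - s * v) ^ 2 / (s * t) := by
    field_simp
    ring
  have : 0 ≤ (t * u - s * v) ^ 2 / (s * t) := by positivity
  linarith

section Dilation

variable {m : ℕ}

def scaleCoords (θ : Fin m → ℝ) (x : EuclideanSpace ℝ (Fin m)) : EuclideanSpace ℝ (Fin m) :=
  WithLp.toLp 2 (fun i => θ i * x i)

@[simp]
theorem scaleCoords_apply (θ : Fin m → ℝ) (x : EuclideanSpace ℝ (Fin m)) (i : Fin m) :
    scaleCoords θ x i = θ i * x i :=
  rfl

theorem measurable_scaleCoords (θ : Fin m → ℝ) : Measurable (scaleCoords θ) :=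
  Continuous.measurable (by unfold scaleCoords; fun_prop)

theorem dilate_eq_map (θ : Fin m → ℝ) (μ : Measure (EuclideanSpace ℝ (Fin m))) :
    dilate θ μ = μ.map (scaleCoords θ) :=
  rfl

theorem FiniteSecondMoment.memLp_two_id {μ : Measure (EuclideanSpace ℝ (Fin m))}
    (hμ : FiniteSecondMoment μ) : MemLp id 2 μ :=
  (memLp_two_iff_integrable_sq_norm aestronglyMeasurable_id).mpr <|
    (lintegral_ofReal_ne_top_iff_integrable (by fun_prop) (ae_of_all _ fun _ => sq_nonneg _)).mp hμ

theorem FiniteSecondMoment.integrable_sq_apply {μ : Measure (EuclideanSpace ℝ (Fin m))}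
    (hμ : FiniteSecondMoment μ) (i : Fin m) : Integrable (fun x => x i ^ 2) μ :=
  ((EuclideanSpace.proj (𝕜 := ℝ) i).comp_memLp' hμ.memLp_two_id).integrable_sq

theorem integrable_sum_mul_sq_apply {μ : Measure (EuclideanSpace ℝ (Fin m))}
    (hμ : ∀ i, Integrable (fun x => x i ^ 2) μ) (w : Fin m → ℝ) :
    Integrable (fun x => ∑ i, w i * x i ^ 2) μ :=
  integrable_finsetSum _ fun i _ => (hμ i).const_mul (w i)

theorem integral_sum_mul_sq_apply {μ : Measure (EuclideanSpace ℝ (Fin m))}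
    (hμ : ∀ i, Integrable (fun x => x i ^ 2) μ) (w : Fin m → ℝ) :
    ∫ x, ∑ i, w i * x i ^ 2 ∂μ = ∑ i, w i * ∫ x, x i ^ 2 ∂μ := by
  rw [integral_finsetSum _ fun i _ => (hμ i).const_mul (w i)]
  simp_rw [integral_const_mul]

theorem integrable_sq_apply_dilate {μ : Measure (EuclideanSpace ℝ (Fin m))} {i : Fin m}
    (hμ : Integrable (fun x => x i ^ 2) μ) (θ : Fin m → ℝ) :
    Integrable (fun x => x i ^ 2) (dilate θ μ) := by
  rw [dilate_eq_map, integrable_map_measure (by fun_prop) (measurable_scaleCoords θ).aemeasurable]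
  simpa [Function.comp_def, mul_pow] using hμ.const_mul (θ i ^ 2)

theorem integral_sq_apply_dilate (μ : Measure (EuclideanSpace ℝ (Fin m))) (θ : Fin m → ℝ)
    (i : Fin m) : ∫ x, x i ^ 2 ∂(dilate θ μ) = θ i ^ 2 * ∫ x, x i ^ 2 ∂μ := by
  rw [dilate_eq_map, integral_map (measurable_scaleCoords θ).aemeasurable (by fun_prop),
    ← integral_const_mul]
  simp [mul_pow]

theorem lintegral_cost_ge_of_dilate {μ : Measure (EuclideanSpace ℝ (Fin m))}
    (hμ : ∀ i, Integrable (fun x => x i ^ 2) μ) {θ θ' : Fin m → ℝ} (hθ : ∀ i, 0 < θ i)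
    (hθ' : ∀ i, 0 < θ' i) {γ : Measure (EuclideanSpace ℝ (Fin m) × EuclideanSpace ℝ (Fin m))}
    (hγ₁ : γ.map Prod.fst = dilate θ μ) (hγ₂ : γ.map Prod.snd = dilate θ' μ) :
    ENNReal.ofReal (∑ i, (θ i - θ' i) ^ 2 * ∫ x, x i ^ 2 ∂μ) ≤
      ∫⁻ p, ENNReal.ofReal (‖p.1 - p.2‖ ^ 2) ∂γ := by
  have hdil (θ : Fin m → ℝ) i := integrable_sq_apply_dilate (hμ i) θ
  have hpot (x y : EuclideanSpace ℝ (Fin m)) :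
      ∑ i, (1 - θ' i / θ i) * x i ^ 2 + ∑ i, (1 - θ i / θ' i) * y i ^ 2 ≤ ‖x - y‖ ^ 2 := by
    rw [EuclideanSpace.real_norm_sq_eq, ← Finset.sum_add_distrib]
    exact Finset.sum_le_sum fun i _ => one_sub_div_mul_sq_add_le_sq_sub (hθ i) (hθ' i) (x i) (y i)
  convert ofReal_integral_add_integral_le_lintegral_cost (c := fun p => ‖p.1 - p.2‖ ^ 2)
    hγ₁ hγ₂ (integrable_sum_mul_sq_apply (hdil θ) _) (integrable_sum_mul_sq_apply (hdil θ') _) hpot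
    using 2
  rw [integral_sum_mul_sq_apply (hdil θ), integral_sum_mul_sq_apply (hdil θ'),
    ← Finset.sum_add_distrib]
  refine Finset.sum_congr rfl fun i _ => ?_
  rw [integral_sq_apply_dilate, integral_sq_apply_dilate]
  field_simp [(hθ i).ne', (hθ' i).ne']
  ring

def dilateCoupling (θ θ' : Fin m → ℝ) (μ : Measure (EuclideanSpace ℝ (Fin m))) :
    Measure (EuclideanSpace ℝ (Fin m) × EuclideanSpace ℝ (Fin m)) :=
  μ.map fun x => (scaleCoords θ x, scaleCoords θ' x)

instance (θ θ' : Fin m → ℝ) (μ : Measure (EuclideanSpace ℝ (Fin m))) [IsProbabilityMeasure μ] :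
    IsProbabilityMeasure (dilateCoupling θ θ' μ) :=
  Measure.isProbabilityMeasure_map
    ((measurable_scaleCoords θ).prodMk (measurable_scaleCoords θ')).aemeasurable

theorem map_fst_dilateCoupling (θ θ' : Fin m → ℝ) (μ : Measure (EuclideanSpace ℝ (Fin m))) :
    (dilateCoupling θ θ' μ).map Prod.fst = dilate θ μ :=
  Measure.fst_map_prodMk (measurable_scaleCoords θ')

theorem map_snd_dilateCoupling (θ θ' : Fin m → ℝ) (μ : Measure (EuclideanSpace ℝ (Fin m))) :
    (dilateCoupling θ θ' μ).map Prod.snd = dilate θ' μ :=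
  Measure.snd_map_prodMk (measurable_scaleCoords θ)

theorem lintegral_cost_dilateCoupling {μ : Measure (EuclideanSpace ℝ (Fin m))}
    (hμ : ∀ i, Integrable (fun x => x i ^ 2) μ) (θ θ' : Fin m → ℝ) :
    ∫⁻ p, ENNReal.ofReal (‖p.1 - p.2‖ ^ 2) ∂(dilateCoupling θ θ' μ) =
      ENNReal.ofReal (∑ i, (θ i - θ' i) ^ 2 * ∫ x, x i ^ 2 ∂μ) := by
  have hcost (x : EuclideanSpace ℝ (Fin m)) :
      ‖scaleCoords θ x - scaleCoords θ' x‖ ^ 2 = ∑ i, (θ i - θ' i) ^ 2 * x i ^ 2 := by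
    simp [EuclideanSpace.real_norm_sq_eq, ← sub_mul, mul_pow]
  rw [dilateCoupling, lintegral_map (by fun_prop)
      ((measurable_scaleCoords θ).prodMk (measurable_scaleCoords θ'))]
  simp_rw [hcost]
  rw [← ofReal_integral_eq_lintegral_ofReal (integrable_sum_mul_sq_apply hμ _)
      (ae_of_all _ fun x => by positivity), integral_sum_mul_sq_apply hμ]

end Dilation

/-- For an arbitrary `ν₀ ∈ 𝕎₂(ℝ^m)` (not necessarily absolutely continuous)
and `θ, θ'` with strictly positive entries,
`W₂(ν_θ, ν_{θ'})² = Σᵢ |θᵢ − θ'ᵢ|² ∫ |xᵢ|² dν₀(x)`. -/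
theorem wasserstein_dilation_general {m : ℕ}
    (ν₀ : Measure (EuclideanSpace ℝ (Fin m))) [IsProbabilityMeasure ν₀]
    (hmom : FiniteSecondMoment ν₀)
    (θ θ' : Fin m → ℝ) (hθ : ∀ i, 0 < θ i) (hθ' : ∀ i, 0 < θ' i) :
    (W2 (dilate θ ν₀) (dilate θ' ν₀)) ^ 2 =
      ENNReal.ofReal (∑ i, |θ i - θ' i| ^ 2 * ∫ x, (x i) ^ 2 ∂ν₀) := by
  have hν₀ := hmom.integrable_sq_apply
  simp_rw [sq_abs, sq_W2]
  refine le_antisymm ?_ (le_iInf₂ fun γ _ => le_iInf₂ fun hγ₁ hγ₂ =>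
    lintegral_cost_ge_of_dilate hν₀ hθ hθ' hγ₁ hγ₂)
  exact iInf₂_le_of_le (dilateCoupling θ θ' ν₀) inferInstance <|
    iInf₂_le_of_le (map_fst_dilateCoupling θ θ' ν₀) (map_snd_dilateCoupling θ θ' ν₀)
      (lintegral_cost_dilateCoupling hν₀ θ θ').le
end
end

section
/- Let A = ∏_{i=1}^m [a_{1,i}, a_{2,i}] be a rectangle in ℝ^m with a_{1,i} < a_{2,i} for each i, and let μ₀ be the uniform probability measure on A, i.e., dμ₀ = (1/|A|) 𝟙_A dx where |A| is the Lebesgue measure of A. Let θ, θ' ∈ ℝ^m have strictly positive entries and let μ_θ, μ_{θ'} be the dilations of μ₀ by θ and θ'. Then W₂(μ_θ, μ_{θ'})² = (1/3) Σ_{i=1}^m |θᵢ − θ'ᵢ|² (a_{2,i}² + a_{2,i} a_{1,i} + a_{1,i}²). -/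
open MeasureTheory Filter Set
open scoped ENNReal NNReal

noncomputable section

/-! The coupling `x ↦ (θ ⊙ x, θ' ⊙ x)` of the two dilations costs `∑ᵢ (θᵢ - θ'ᵢ)² 𝔼[xᵢ²]`, and it
is optimal coordinate by coordinate: if `𝔼X² = θᵢ² s` and `𝔼Y² = θ'ᵢ² s`, the weighted AM-GM
inequality `2XY ≤ cX² + c⁻¹Y²` with `c = θ'ᵢ / θᵢ` gives `𝔼(X - Y)² ≥ (θᵢ - θ'ᵢ)² s`. Under the
uniform measure on the box the `i`-th coordinate is uniform on `[a₁ᵢ, a₂ᵢ]`, with second moment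
`(a₂ᵢ² + a₂ᵢ a₁ᵢ + a₁ᵢ²) / 3`. -/

open ProbabilityTheory

theorem two_mul_le_mul_sq_add_inv_mul_sq {c : ℝ} (hc : 0 < c) (x y : ℝ) :
    2 * (x * y) ≤ c * x ^ 2 + c⁻¹ * y ^ 2 := by
  have : c * x ^ 2 + c⁻¹ * y ^ 2 - 2 * (x * y) = (c * x - y) ^ 2 / c := by
    field_simp; ring
  nlinarith [div_nonneg (sq_nonneg (c * x - y)) hc.le]

theorem ofReal_sq_sub_mul_le_lintegral_sq_sub {Ω : Type*} [MeasurableSpace Ω] (μ : Measure Ω)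
    {X Y : Ω → ℝ} (hX : Measurable X) (hY : Measurable Y) {a b : ℝ} (ha : 0 < a) (hb : 0 < b)
    {s : ℝ≥0∞} (hs : s ≠ ∞) (hXs : ∫⁻ ω, ENNReal.ofReal (X ω ^ 2) ∂μ = ENNReal.ofReal (a ^ 2) * s)
    (hYs : ∫⁻ ω, ENNReal.ofReal (Y ω ^ 2) ∂μ = ENNReal.ofReal (b ^ 2) * s) :
    ENNReal.ofReal ((a - b) ^ 2) * s ≤ ∫⁻ ω, ENNReal.ofReal ((X ω - Y ω) ^ 2) ∂μ := by
  set c := b / a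
  have hc : 0 < c := div_pos hb ha
  have hpoint : ∀ ω, ENNReal.ofReal (X ω ^ 2) + ENNReal.ofReal (Y ω ^ 2) ≤
      ENNReal.ofReal ((X ω - Y ω) ^ 2) +
        (ENNReal.ofReal c * ENNReal.ofReal (X ω ^ 2) +
          ENNReal.ofReal c⁻¹ * ENNReal.ofReal (Y ω ^ 2)) := by
    intro ω
    rw [← ENNReal.ofReal_mul hc.le, ← ENNReal.ofReal_mul (inv_nonneg.2 hc.le),
      ← ENNReal.ofReal_add (by positivity) (by positivity),
      ← ENNReal.ofReal_add (by positivity) (by positivity),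
      ← ENNReal.ofReal_add (by positivity) (by positivity)]
    exact ENNReal.ofReal_le_ofReal (by nlinarith [two_mul_le_mul_sq_add_inv_mul_sq hc (X ω) (Y ω)])
  have hint := lintegral_mono hpoint (μ := μ)
  rw [lintegral_add_left (by fun_prop), lintegral_add_left (by fun_prop),
    lintegral_add_left (by fun_prop), lintegral_const_mul _ (by fun_prop),
    lintegral_const_mul _ (by fun_prop), hXs, hYs] at hint
  have hab : 0 ≤ a * b := by positivity
  have e₁ : ENNReal.ofReal c * (ENNReal.ofReal (a ^ 2) * s) = ENNReal.ofReal (a * b) * s := by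
    rw [← mul_assoc, ← ENNReal.ofReal_mul hc.le]
    congr 2
    simp only [c]
    field_simp
  have e₂ : ENNReal.ofReal c⁻¹ * (ENNReal.ofReal (b ^ 2) * s) = ENNReal.ofReal (a * b) * s := by
    rw [← mul_assoc, ← ENNReal.ofReal_mul (inv_nonneg.2 hc.le)]
    congr 2
    simp only [c]
    field_simp
  have e₃ : ENNReal.ofReal (a ^ 2) * s + ENNReal.ofReal (b ^ 2) * s =
      ENNReal.ofReal ((a - b) ^ 2) * s +
        (ENNReal.ofReal (a * b) * s + ENNReal.ofReal (a * b) * s) := by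
    rw [← add_mul, ← add_mul, ← add_mul, ← ENNReal.ofReal_add hab hab,
      ← ENNReal.ofReal_add (sq_nonneg _) (add_nonneg hab hab),
      ← ENNReal.ofReal_add (sq_nonneg a) (sq_nonneg b)]
    congr 2
    ring
  rw [e₁, e₂, e₃] at hint
  exact ENNReal.le_of_add_le_add_right (by finiteness) hint

theorem lintegral_ofReal_norm_sq_eq_sum {ι Ω : Type*} [Fintype ι] [MeasurableSpace Ω]
    (ν : Measure Ω) {f : Ω → EuclideanSpace ℝ ι} (hf : Measurable f) :
    ∫⁻ ω, ENNReal.ofReal (‖f ω‖ ^ 2) ∂ν = ∑ i, ∫⁻ ω, ENNReal.ofReal (f ω i ^ 2) ∂ν := by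
  simp_rw [EuclideanSpace.real_norm_sq_eq,
    ENNReal.ofReal_sum_of_nonneg fun i _ => sq_nonneg (f _ i)]
  exact lintegral_finsetSum _ fun i _ => by fun_prop

theorem ProbabilityTheory.map_cond_preimage {α β : Type*} [MeasurableSpace α] [MeasurableSpace β]
    (μ : Measure α) {f : α → β} (hf : Measurable f) {s : Set β} (hs : MeasurableSet s) :
    (μ[|f ⁻¹' s]).map f = (μ.map f)[|s] := by
  rw [cond, cond, Measure.map_smul, Measure.restrict_map hf hs, Measure.map_apply hf hs]

theorem ProbabilityTheory.pi_cond_univ_pi {ι : Type*} [Fintype ι] {α : ι → Type*}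
    [∀ i, MeasurableSpace (α i)] (ν : ∀ i, Measure (α i)) [∀ i, SigmaFinite (ν i)]
    {s : ∀ i, Set (α i)} (hs : ∀ i, ν i (s i) ≠ ∞) :
    (Measure.pi ν)[|univ.pi s] = Measure.pi fun i => (ν i)[|s i] := by
  refine (Measure.pi_eq fun t ht => ?_).symm
  rw [cond_apply' (.univ_pi ht), ← pi_inter_distrib, Measure.pi_pi, Measure.pi_pi,
    ENNReal.prod_inv_distrib fun i _ j _ _ => .inr (hs j), ← Finset.prod_mul_distrib]
  simp_rw [cond_apply' (ht _)]

theorem lintegral_sq_cond_Icc {a b : ℝ} (hab : a < b) :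
    ∫⁻ t, ENNReal.ofReal (t ^ 2) ∂volume[|Icc a b] =
      ENNReal.ofReal ((b ^ 2 + b * a + a ^ 2) / 3) := by
  have hsq : ∫⁻ t in Icc a b, ENNReal.ofReal (t ^ 2) = ENNReal.ofReal ((b ^ 3 - a ^ 3) / 3) := by
    rw [← ofReal_integral_eq_lintegral_ofReal (continuous_pow 2).integrableOn_Icc
        (.of_forall fun t => sq_nonneg t),
      integral_Icc_eq_integral_Ioc, ← intervalIntegral.integral_of_le hab.le, integral_pow]
    norm_num
  rw [ProbabilityTheory.cond, lintegral_smul_measure, hsq, Real.volume_Icc,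
    ← ENNReal.ofReal_inv_of_pos (sub_pos.2 hab), smul_eq_mul,
    ← ENNReal.ofReal_mul (inv_nonneg.2 (sub_pos.2 hab).le)]
  congr 1
  field_simp [(sub_pos.2 hab).ne']
  ring

section

variable {m : ℕ}

def transportCost (γ : Measure (EuclideanSpace ℝ (Fin m) × EuclideanSpace ℝ (Fin m))) : ℝ≥0∞ :=
  ∫⁻ p, ENNReal.ofReal (‖p.1 - p.2‖ ^ 2) ∂γ

theorem transportCost_eq_sum
    (γ : Measure (EuclideanSpace ℝ (Fin m) × EuclideanSpace ℝ (Fin m))) :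
    transportCost γ = ∑ i, ∫⁻ p, ENNReal.ofReal ((p.1 i - p.2 i) ^ 2) ∂γ :=
  lintegral_ofReal_norm_sq_eq_sum γ (measurable_fst.sub measurable_snd)

theorem W2_sq_eq_transportCost_of_le {μ ν : Measure (EuclideanSpace ℝ (Fin m))}
    (γ₀ : Measure (EuclideanSpace ℝ (Fin m) × EuclideanSpace ℝ (Fin m))) [IsProbabilityMeasure γ₀]
    (h₁ : γ₀.map Prod.fst = μ) (h₂ : γ₀.map Prod.snd = ν)
    (hopt : ∀ γ, IsProbabilityMeasure γ → γ.map Prod.fst = μ → γ.map Prod.snd = ν →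
      transportCost γ₀ ≤ transportCost γ) :
    W2 μ ν ^ 2 = transportCost γ₀ := by
  have hW : W2 μ ν = transportCost γ₀ ^ (1 / 2 : ℝ) := by
    refine le_antisymm (iInf_le_of_le γ₀ ?_) ?_
    · rw [iInf_pos ‹_›, iInf_pos h₁, iInf_pos h₂]
      rfl
    · exact le_iInf fun γ => le_iInf fun hγ => le_iInf fun hγ₁ => le_iInf fun hγ₂ =>
        ENNReal.rpow_le_rpow (hopt γ hγ hγ₁ hγ₂) (by norm_num)
  rw [hW, ← ENNReal.rpow_natCast, ← ENNReal.rpow_mul]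
  norm_num

theorem measurable_dilation_s6 (θ : Fin m → ℝ) :
    Measurable fun x : EuclideanSpace ℝ (Fin m) => WithLp.toLp 2 (fun i => θ i * x i) := by
  fun_prop

theorem lintegral_sq_apply_dilate (θ : Fin m → ℝ) (μ : Measure (EuclideanSpace ℝ (Fin m)))
    (i : Fin m) :
    ∫⁻ x, ENNReal.ofReal (x i ^ 2) ∂(dilate θ μ) =
      ENNReal.ofReal (θ i ^ 2) * ∫⁻ x, ENNReal.ofReal (x i ^ 2) ∂μ := by
  rw [dilate, lintegral_map (by fun_prop) (measurable_dilation_s6 θ),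
    ← lintegral_const_mul _ (by fun_prop)]
  simp_rw [← ENNReal.ofReal_mul (sq_nonneg _), mul_pow]

theorem ofReal_sq_sub_mul_le_lintegral_sq_sub_of_map_eq_dilate
    {θ θ' : Fin m → ℝ} {μ : Measure (EuclideanSpace ℝ (Fin m))}
    {γ : Measure (EuclideanSpace ℝ (Fin m) × EuclideanSpace ℝ (Fin m))}
    (h₁ : γ.map Prod.fst = dilate θ μ) (h₂ : γ.map Prod.snd = dilate θ' μ)
    {i : Fin m} (hθ : 0 < θ i) (hθ' : 0 < θ' i) (hμ : ∫⁻ x, ENNReal.ofReal (x i ^ 2) ∂μ ≠ ∞) :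
    ENNReal.ofReal ((θ i - θ' i) ^ 2) * ∫⁻ x, ENNReal.ofReal (x i ^ 2) ∂μ ≤
      ∫⁻ p, ENNReal.ofReal ((p.1 i - p.2 i) ^ 2) ∂γ := by
  refine ofReal_sq_sub_mul_le_lintegral_sq_sub γ (by fun_prop) (by fun_prop) hθ hθ' hμ ?_ ?_
  · rw [← lintegral_sq_apply_dilate, ← h₁, lintegral_map (by fun_prop) measurable_fst]
  · rw [← lintegral_sq_apply_dilate, ← h₂, lintegral_map (by fun_prop) measurable_snd]

theorem W2_dilate_sq_eq_sum (μ : Measure (EuclideanSpace ℝ (Fin m))) [IsProbabilityMeasure μ]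
    {θ θ' : Fin m → ℝ} (hθ : ∀ i, 0 < θ i) (hθ' : ∀ i, 0 < θ' i)
    (hμ : ∀ i, ∫⁻ x, ENNReal.ofReal (x i ^ 2) ∂μ ≠ ∞) :
    W2 (dilate θ μ) (dilate θ' μ) ^ 2 =
      ∑ i, ENNReal.ofReal ((θ i - θ' i) ^ 2) * ∫⁻ x, ENNReal.ofReal (x i ^ 2) ∂μ := by
  have hT := (measurable_dilation_s6 θ).prodMk (measurable_dilation_s6 θ')
  set γ₀ := μ.map fun x =>
    (WithLp.toLp 2 (fun i => θ i * x i), WithLp.toLp 2 (fun i => θ' i * x i))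
  have : IsProbabilityMeasure γ₀ := Measure.isProbabilityMeasure_map hT.aemeasurable
  have hcost : transportCost γ₀ =
      ∑ i, ENNReal.ofReal ((θ i - θ' i) ^ 2) * ∫⁻ x, ENNReal.ofReal (x i ^ 2) ∂μ := by
    refine (transportCost_eq_sum γ₀).trans (Finset.sum_congr rfl fun i _ => ?_)
    rw [lintegral_map (by fun_prop) hT, ← lintegral_const_mul _ (by fun_prop)]
    simp_rw [← ENNReal.ofReal_mul (sq_nonneg _), ← mul_pow, sub_mul]
  rw [← hcost]
  refine W2_sq_eq_transportCost_of_le γ₀ ?_ ?_ fun γ _ h₁ h₂ => ?_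
  · rw [Measure.map_map measurable_fst hT]; rfl
  · rw [Measure.map_map measurable_snd hT]; rfl
  rw [hcost, transportCost_eq_sum]
  exact Finset.sum_le_sum fun i _ =>
    ofReal_sq_sub_mul_le_lintegral_sq_sub_of_map_eq_dilate h₁ h₂ (hθ i) (hθ' i) (hμ i)

theorem map_ofLp_cond_box (a₁ a₂ : Fin m → ℝ) :
    (volume[|{x : EuclideanSpace ℝ (Fin m) | ∀ i, x i ∈ Icc (a₁ i) (a₂ i)}]).map WithLp.ofLp =
      Measure.pi fun i => volume[|Icc (a₁ i) (a₂ i)] := by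
  have hbox : {x : EuclideanSpace ℝ (Fin m) | ∀ i, x i ∈ Icc (a₁ i) (a₂ i)} =
      WithLp.ofLp ⁻¹' univ.pi fun i => Icc (a₁ i) (a₂ i) := by
    ext x; simp only [mem_ofPred_eq, mem_preimage, mem_univ_pi]
  rw [hbox, map_cond_preimage _ (PiLp.volume_preserving_ofLp (Fin m)).measurable
    (.univ_pi fun i => measurableSet_Icc), (PiLp.volume_preserving_ofLp (Fin m)).map_eq,
    volume_pi, pi_cond_univ_pi _ fun i => by simp]

end

/-- Let `A = ∏ᵢ [a₁ᵢ, a₂ᵢ]` be a rectangle in `ℝ^m` with `a₁ᵢ < a₂ᵢ`, and let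
`μ₀` be the uniform probability measure on `A`. Then for dilations by `θ, θ'` with strictly
positive entries, `W₂(μ_θ, μ_{θ'})² = (1/3) Σᵢ |θᵢ − θ'ᵢ|² (a₂ᵢ² + a₂ᵢ a₁ᵢ + a₁ᵢ²)`. -/
theorem wasserstein_dilation_rectangle {m : ℕ}
    (a₁ a₂ : Fin m → ℝ) (ha : ∀ i, a₁ i < a₂ i)
    (A : Set (EuclideanSpace ℝ (Fin m)))
    (hA : A = {x : EuclideanSpace ℝ (Fin m) | ∀ i, x i ∈ Set.Icc (a₁ i) (a₂ i)})
    (μ₀ : Measure (EuclideanSpace ℝ (Fin m)))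
    (hμ₀ : μ₀ = (volume A)⁻¹ • volume.restrict A)
    (θ θ' : Fin m → ℝ) (hθ : ∀ i, 0 < θ i) (hθ' : ∀ i, 0 < θ' i) :
    (W2 (dilate θ μ₀) (dilate θ' μ₀)) ^ 2 =
      ENNReal.ofReal ((1 / 3) *
        ∑ i, |θ i - θ' i| ^ 2 * ((a₂ i) ^ 2 + a₂ i * a₁ i + (a₁ i) ^ 2)) := by
  have hμ₀ : μ₀ = volume[|A] := hμ₀
  have hside : ∀ i, IsProbabilityMeasure (volume[|Icc (a₁ i) (a₂ i)]) := fun i =>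
    cond_isProbabilityMeasure_of_finite (by simpa using ha i) (by simp)
  have hmap := map_ofLp_cond_box a₁ a₂
  rw [← hA, ← hμ₀] at hmap
  have : IsProbabilityMeasure (μ₀.map WithLp.ofLp) := hmap ▸ inferInstance
  have : IsProbabilityMeasure μ₀ := Measure.isProbabilityMeasure_of_map WithLp.ofLp
  have hmoment : ∀ i, ∫⁻ x, ENNReal.ofReal (x i ^ 2) ∂μ₀ =
      ENNReal.ofReal (((a₂ i) ^ 2 + a₂ i * a₁ i + (a₁ i) ^ 2) / 3) := fun i => by
    rw [← lintegral_sq_cond_Icc (ha i),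
      ← (measurePreserving_eval (fun j => volume[|Icc (a₁ j) (a₂ j)]) i).map_eq, ← hmap,
      Measure.map_map (measurable_pi_apply i) (by fun_prop),
      lintegral_map (by fun_prop) (by fun_prop)]
    rfl
  have hq : ∀ i, 0 ≤ (a₂ i) ^ 2 + a₂ i * a₁ i + (a₁ i) ^ 2 := fun i => by
    nlinarith [sq_nonneg (a₂ i + a₁ i)]
  rw [W2_dilate_sq_eq_sum μ₀ hθ hθ' fun i => hmoment i ▸ ENNReal.ofReal_ne_top, Finset.mul_sum,
    ENNReal.ofReal_sum_of_nonneg fun i _ =>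
      mul_nonneg (by norm_num) (mul_nonneg (sq_nonneg _) (hq i))]
  refine Finset.sum_congr rfl fun i _ => ?_
  rw [hmoment, ← ENNReal.ofReal_mul (sq_nonneg _), sq_abs]
  ring_nf
end
end

section
/- Fix θ, θ' and suppose T_θ, T_{θ'} : ℝ^m → ℝ^m are Lipschitz maps. Suppose there is a constant c ≥ 0 such that W₂((T_θ)♯μ₀, (T_{θ'})♯μ₀) = c for every absolutely continuous μ₀ ∈ 𝕎₂(ℝ^m). Then for every (not necessarily absolutely continuous) ν₀ ∈ 𝕎₂(ℝ^m), W₂((T_θ)♯ν₀, (T_{θ'})♯ν₀) = c. -/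
/-!
A `K`-Lipschitz map scales `W₂` distances by at most `K`, so by the triangle inequality
`ν ↦ W₂(T♯ν, T'♯ν)` is `2K`-Lipschitz for `W₂`, and it suffices that absolutely continuous
measures of finite second moment are `W₂`-dense. Convolving `ν` with the uniform distribution on
the ball of radius `ε` gives such a measure, at distance at most `ε` from `ν` through the coupling
`(x, x + y)`. The triangle inequality for `W₂` comes from gluing two couplings by disintegration
and Minkowski's inequality in `L²`.
-/

open MeasureTheory Filter Set
open scoped ENNReal NNReal

noncomputable section

open ProbabilityTheory

section Coupling

variable {E : Type*} [MeasurableSpace E]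

def IsCoupling (γ : Measure (E × E)) (μ ν : Measure E) : Prop :=
  IsProbabilityMeasure γ ∧ γ.map Prod.fst = μ ∧ γ.map Prod.snd = ν

lemma IsCoupling.swap {γ : Measure (E × E)} {μ ν : Measure E} (h : IsCoupling γ μ ν) :
    IsCoupling (γ.map Prod.swap) ν μ := by
  obtain ⟨hγ, h₁, h₂⟩ := h
  exact ⟨Measure.isProbabilityMeasure_map measurable_swap.aemeasurable,
    by rw [Measure.map_map measurable_fst measurable_swap]; exact h₂,
    by rw [Measure.map_map measurable_snd measurable_swap]; exact h₁⟩

lemma IsCoupling.map_prodMap {γ : Measure (E × E)} {μ ν : Measure E} (h : IsCoupling γ μ ν)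
    {T : E → E} (hT : Measurable T) :
    IsCoupling (γ.map (Prod.map T T)) (μ.map T) (ν.map T) := by
  obtain ⟨hγ, h₁, h₂⟩ := h
  refine ⟨Measure.isProbabilityMeasure_map (hT.prodMap hT).aemeasurable, ?_, ?_⟩
  · rw [Measure.map_map measurable_fst (hT.prodMap hT), ← h₁, Measure.map_map hT measurable_fst]
    rfl
  · rw [Measure.map_map measurable_snd (hT.prodMap hT), ← h₂, Measure.map_map hT measurable_snd]
    rfl

/-- Gluing lemma: disintegrating `γ₂` along its first factor and composing with `γ₁` gives a
measure on triples with two-dimensional marginals `γ₁` and `γ₂`. -/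
lemma IsCoupling.exists_glue [StandardBorelSpace E] [Nonempty E] {γ₁ γ₂ : Measure (E × E)}
    {μ ρ ν : Measure E} (h₁ : IsCoupling γ₁ μ ρ) (h₂ : IsCoupling γ₂ ρ ν) :
    ∃ θ : Measure ((E × E) × E), θ.map Prod.fst = γ₁ ∧ θ.map (fun q => (q.1.2, q.2)) = γ₂ ∧
      IsCoupling (θ.map fun q => (q.1.1, q.2)) μ ν := by
  obtain ⟨hγ₁, hμ, hρ₁⟩ := h₁
  obtain ⟨hγ₂, hρ₂, hν⟩ := h₂
  set θ := γ₁ ⊗ₘ γ₂.condKernel.comap Prod.snd measurable_snd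
  have hθ₁ : θ.map Prod.fst = γ₁ := Measure.fst_compProd _ _
  have hθ₂ : θ.map (fun q => (q.1.2, q.2)) = γ₂ := by
    conv_rhs => rw [← γ₂.disintegrate γ₂.condKernel]
    ext s hs
    rw [Measure.map_apply (by fun_prop) hs, Measure.compProd_apply hs,
      Measure.compProd_apply (hs.preimage (by fun_prop)), Measure.fst, hρ₂, ← hρ₁,
      lintegral_map (Kernel.measurable_kernel_prodMk_left hs) measurable_snd]
    rfl
  refine ⟨θ, hθ₁, hθ₂, Measure.isProbabilityMeasure_map (by fun_prop), ?_, ?_⟩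
  · rw [Measure.map_map measurable_fst (by fun_prop), ← hμ, ← hθ₁,
      Measure.map_map measurable_fst measurable_fst]
    rfl
  · rw [Measure.map_map measurable_snd (by fun_prop), ← hν, ← hθ₂,
      Measure.map_map measurable_snd (by fun_prop)]
    rfl

lemma isCoupling_map_prod_add [AddGroup E] [MeasurableAdd₂ E] (ν ρ : Measure E)
    [IsProbabilityMeasure ν] [IsProbabilityMeasure ρ] :
    IsCoupling ((ν.prod ρ).map fun p => (p.1, p.1 + p.2)) ν (ν ∗ ρ) := by
  refine ⟨Measure.isProbabilityMeasure_map (by fun_prop), ?_, ?_⟩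
  · rw [Measure.map_map measurable_fst (by fun_prop)]
    exact Measure.map_fst_prod.trans (by simp)
  · rw [Measure.map_map measurable_snd (by fun_prop)]
    rfl

end Coupling

section Cost

variable {E : Type*} [NormedAddCommGroup E] [MeasurableSpace E] [BorelSpace E]
  [SecondCountableTopology E]

lemma eLpNorm_sub_map_swap (γ : Measure (E × E)) (p : ℝ≥0∞) :
    eLpNorm (fun x : E × E => x.1 - x.2) p (γ.map Prod.swap) =
      eLpNorm (fun x : E × E => x.1 - x.2) p γ := by
  rw [eLpNorm_map_measure (by fun_prop) measurable_swap.aemeasurable, ← eLpNorm_neg]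
  congr 1
  ext x
  simp

lemma eLpNorm_sub_map_prodMap_le {K : ℝ≥0} {T : E → E} (hT : LipschitzWith K T)
    (γ : Measure (E × E)) (p : ℝ≥0∞) :
    eLpNorm (fun x : E × E => x.1 - x.2) p (γ.map (Prod.map T T)) ≤
      K * eLpNorm (fun x : E × E => x.1 - x.2) p γ := by
  have hTm : Measurable T := hT.continuous.measurable
  rw [eLpNorm_map_measure (by fun_prop) (hTm.prodMap hTm).aemeasurable]
  refine eLpNorm_le_nnreal_smul_eLpNorm_of_ae_le_mul (ae_of_all _ fun x => ?_) p
  simpa [← nndist_eq_nnnorm] using hT.nndist_le x.1 x.2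

lemma eLpNorm_sub_map_outer_le (θ : Measure ((E × E) × E)) {p : ℝ≥0∞} (hp : 1 ≤ p) :
    eLpNorm (fun x : E × E => x.1 - x.2) p (θ.map fun q => (q.1.1, q.2)) ≤
      eLpNorm (fun x : E × E => x.1 - x.2) p (θ.map Prod.fst) +
        eLpNorm (fun x : E × E => x.1 - x.2) p (θ.map fun q => (q.1.2, q.2)) := by
  rw [eLpNorm_map_measure (by fun_prop) (by fun_prop),
    eLpNorm_map_measure (by fun_prop) (by fun_prop),
    eLpNorm_map_measure (by fun_prop) (by fun_prop)]
  refine le_of_eq_of_le ?_ (eLpNorm_add_le (μ := θ) (f := fun q => q.1.1 - q.1.2)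
    (g := fun q => q.1.2 - q.2) (by fun_prop) (by fun_prop) hp)
  congr 1
  ext q
  simp

end Cost

section Wasserstein

variable {m : ℕ}

lemma W2_eq_iInf_eLpNorm (μ ν : Measure (EuclideanSpace ℝ (Fin m))) :
    W2 μ ν = ⨅ (γ) (_ : IsCoupling γ μ ν), eLpNorm (fun x => x.1 - x.2) 2 γ := by
  simp only [W2, IsCoupling, iInf_and]
  refine iInf_congr fun γ => iInf_congr fun _ => iInf_congr fun _ => iInf_congr fun _ => ?_
  rw [eLpNorm_eq_lintegral_rpow_enorm_toReal (by norm_num) (by norm_num)]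
  simp only [norm_nonneg, ENNReal.ofReal_pow, one_div, ← ofReal_norm, ENNReal.toReal_ofNat,
    ENNReal.rpow_ofNat]

lemma W2_le_eLpNorm {μ ν : Measure (EuclideanSpace ℝ (Fin m))} {γ} (hγ : IsCoupling γ μ ν) :
    W2 μ ν ≤ eLpNorm (fun x => x.1 - x.2) 2 γ := by
  rw [W2_eq_iInf_eLpNorm]
  exact iInf₂_le γ hγ

lemma W2_comm (μ ν : Measure (EuclideanSpace ℝ (Fin m))) : W2 μ ν = W2 ν μ := by
  suffices ∀ μ ν : Measure (EuclideanSpace ℝ (Fin m)), W2 ν μ ≤ W2 μ ν from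
    le_antisymm (this ν μ) (this μ ν)
  intro μ ν
  rw [W2_eq_iInf_eLpNorm μ ν]
  exact le_iInf₂ fun γ hγ => (W2_le_eLpNorm hγ.swap).trans_eq (eLpNorm_sub_map_swap γ 2)

lemma W2_triangle (μ ρ ν : Measure (EuclideanSpace ℝ (Fin m))) :
    W2 μ ν ≤ W2 μ ρ + W2 ρ ν := by
  rw [W2_eq_iInf_eLpNorm μ ρ, W2_eq_iInf_eLpNorm ρ ν]
  simp only [ENNReal.iInf_add, ENNReal.add_iInf, le_iInf_iff]
  intro γ₂ h₂ γ₁ h₁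
  obtain ⟨θ, rfl, rfl, hθ⟩ := h₁.exists_glue h₂
  exact (W2_le_eLpNorm hθ).trans (eLpNorm_sub_map_outer_le θ one_le_two)

lemma W2_map_le {K : ℝ≥0} (hK : K ≠ 0) {T : EuclideanSpace ℝ (Fin m) → EuclideanSpace ℝ (Fin m)}
    (hT : LipschitzWith K T) (μ ν : Measure (EuclideanSpace ℝ (Fin m))) :
    W2 (μ.map T) (ν.map T) ≤ K * W2 μ ν := by
  rw [W2_eq_iInf_eLpNorm μ ν]
  simp only [ENNReal.mul_iInf_of_ne (ENNReal.coe_ne_zero.mpr hK) ENNReal.coe_ne_top, le_iInf_iff]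
  intro γ hγ
  exact (W2_le_eLpNorm (hγ.map_prodMap hT.continuous.measurable)).trans
    (eLpNorm_sub_map_prodMap_le hT γ 2)

variable {T T' : EuclideanSpace ℝ (Fin m) → EuclideanSpace ℝ (Fin m)} {K : ℝ≥0}

lemma W2_map_pair_le_add (hK : K ≠ 0) (hT : LipschitzWith K T) (hT' : LipschitzWith K T')
    (μ ν : Measure (EuclideanSpace ℝ (Fin m))) :
    W2 (μ.map T) (μ.map T') ≤ W2 (ν.map T) (ν.map T') + 2 * K * W2 μ ν :=
  calc W2 (μ.map T) (μ.map T')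
      ≤ W2 (μ.map T) (ν.map T') + W2 (ν.map T') (μ.map T') := W2_triangle _ _ _
    _ ≤ W2 (μ.map T) (ν.map T) + W2 (ν.map T) (ν.map T') + W2 (ν.map T') (μ.map T') := by
        gcongr
        exact W2_triangle _ _ _
    _ ≤ K * W2 μ ν + W2 (ν.map T) (ν.map T') + K * W2 ν μ := by
        gcongr
        · exact W2_map_le hK hT μ ν
        · exact W2_map_le hK hT' ν μ
    _ = W2 (ν.map T) (ν.map T') + 2 * K * W2 μ ν := by
        rw [W2_comm ν μ]
        ring

lemma W2_map_pair_eq_of_forall_W2_le (hK : K ≠ 0) (hT : LipschitzWith K T)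
    (hT' : LipschitzWith K T') {ν : Measure (EuclideanSpace ℝ (Fin m))} {a : ℝ≥0∞}
    (h : ∀ ε : ℝ≥0, 0 < ε → ∃ μ, W2 ν μ ≤ ε ∧ W2 (μ.map T) (μ.map T') = a) :
    W2 (ν.map T) (ν.map T') = a := by
  have h2K : (2 * K : ℝ≥0) ≠ 0 := mul_ne_zero two_ne_zero hK
  have approx : ∀ η : ℝ≥0, 0 < η → ∃ μ, 2 * K * W2 ν μ ≤ η ∧ W2 (μ.map T) (μ.map T') = a := by
    intro η hη
    obtain ⟨μ, hνμ, hμ⟩ := h (η / (2 * K)) (div_pos hη (pos_iff_ne_zero.mpr h2K))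
    refine ⟨μ, ?_, hμ⟩
    calc 2 * K * W2 ν μ ≤ ((2 * K * (η / (2 * K)) : ℝ≥0) : ℝ≥0∞) := by
          push_cast
          gcongr
      _ = η := by rw [mul_div_cancel₀ _ h2K]
  refine le_antisymm (ENNReal.le_of_forall_pos_le_add fun η hη _ => ?_)
    (ENNReal.le_of_forall_pos_le_add fun η hη _ => ?_) <;>
  obtain ⟨μ, hνμ, rfl⟩ := approx η hη
  · exact (W2_map_pair_le_add hK hT hT' ν μ).trans (by gcongr)
  · rw [W2_comm ν μ] at hνμ
    exact (W2_map_pair_le_add hK hT hT' μ ν).trans (by gcongr)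

end Wasserstein

section Smoothing

variable {m : ℕ}

lemma finiteSecondMoment_iff_memLp (μ : Measure (EuclideanSpace ℝ (Fin m))) :
    FiniteSecondMoment μ ↔ MemLp id 2 μ := by
  rw [FiniteSecondMoment, ← lt_top_iff_ne_top, MemLp,
    eLpNorm_lt_top_iff_lintegral_rpow_enorm_lt_top (by norm_num) (by norm_num)]
  simp only [aestronglyMeasurable_id, true_and, id, ENNReal.toReal_ofNat, ENNReal.rpow_ofNat,
    ← ofReal_norm, ENNReal.ofReal_pow (norm_nonneg _)]

lemma exists_absolutelyContinuous_W2_le {ν : Measure (EuclideanSpace ℝ (Fin m))}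
    [IsProbabilityMeasure ν] (hν : FiniteSecondMoment ν) {ε : ℝ≥0} (hε : 0 < ε) :
    ∃ μ, IsProbabilityMeasure μ ∧ μ ≪ volume ∧ FiniteSecondMoment μ ∧ W2 ν μ ≤ ε := by
  set ρ := volume[|Metric.closedBall (0 : EuclideanSpace ℝ (Fin m)) ε]
  have : IsProbabilityMeasure ρ := cond_isProbabilityMeasure_of_finite
    (Metric.measure_closedBall_pos volume _ hε).ne' measure_closedBall_lt_top.ne
  have hρ : ∀ᵐ y ∂ρ, ‖id y‖ ≤ ε :=
    (ae_cond_mem measurableSet_closedBall).mono fun y hy => by simpa using hy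
  refine ⟨ν ∗ ρ, inferInstance, Measure.conv_absolutelyContinuous cond_absolutelyContinuous,
    ?_, ?_⟩
  · rw [finiteSecondMoment_iff_memLp] at hν ⊢
    rw [Measure.conv, memLp_map_measure_iff (by fun_prop) (by fun_prop)]
    exact (hν.comp_fst ρ).add ((MemLp.of_bound (by fun_prop) ε hρ).comp_snd ν)
  · calc W2 ν (ν ∗ ρ)
        ≤ eLpNorm (fun x => x.1 - x.2) 2 ((ν.prod ρ).map fun p => (p.1, p.1 + p.2)) :=
          W2_le_eLpNorm (isCoupling_map_prod_add ν ρ)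
      _ = eLpNorm (-id) 2 ρ := by
          rw [eLpNorm_map_measure (by fun_prop) (by fun_prop),
            ← eLpNorm_comp_measurePreserving (by fun_prop)
              (measurePreserving_snd (μ := ν) (ν := ρ))]
          congr 1
          ext p
          simp
      _ = eLpNorm id 2 ρ := eLpNorm_neg _ _ _
      _ ≤ ε := by simpa using eLpNorm_le_of_ae_bound (p := 2) hρ

end Smoothing

theorem wasserstein_transfer_ac_to_general_general {m : ℕ}
    (L : ℝ≥0) (Tθ Tθ' : EuclideanSpace ℝ (Fin m) → EuclideanSpace ℝ (Fin m))
    (hTθ : LipschitzWith L Tθ) (hTθ' : LipschitzWith L Tθ')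
    (c : ℝ)
    (h : ∀ μ₀ : Measure (EuclideanSpace ℝ (Fin m)), IsProbabilityMeasure μ₀ →
      μ₀ ≪ volume → FiniteSecondMoment μ₀ →
      W2 (μ₀.map Tθ) (μ₀.map Tθ') = ENNReal.ofReal c) :
    ∀ ν₀ : Measure (EuclideanSpace ℝ (Fin m)), IsProbabilityMeasure ν₀ →
      FiniteSecondMoment ν₀ →
      W2 (ν₀.map Tθ) (ν₀.map Tθ') = ENNReal.ofReal c := by
  intro ν₀ hν₀ hν₀m
  refine W2_map_pair_eq_of_forall_W2_le (K := L + 1) (by positivity)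
    (hTθ.weaken le_self_add) (hTθ'.weaken le_self_add) fun ε hε => ?_
  obtain ⟨μ₀, hμ₀, hμ₀ac, hμ₀m, hW⟩ := exists_absolutelyContinuous_W2_le hν₀m hε
  exact ⟨μ₀, hW, h μ₀ hμ₀ hμ₀ac hμ₀m⟩

/-- Fix Lipschitz maps `T_θ, T_{θ'}` and suppose there is a constant `c ≥ 0`
such that `W₂((T_θ)♯μ₀, (T_{θ'})♯μ₀) = c` for every absolutely continuous
`μ₀ ∈ 𝕎₂(ℝ^m)`. Then `W₂((T_θ)♯ν₀, (T_{θ'})♯ν₀) = c` for every `ν₀ ∈ 𝕎₂(ℝ^m)`. -/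
theorem wasserstein_transfer_ac_to_general {m : ℕ}
    (L : ℝ≥0) (Tθ Tθ' : EuclideanSpace ℝ (Fin m) → EuclideanSpace ℝ (Fin m))
    (hTθ : LipschitzWith L Tθ) (hTθ' : LipschitzWith L Tθ')
    (c : ℝ) (hc : 0 ≤ c)
    (h : ∀ μ₀ : Measure (EuclideanSpace ℝ (Fin m)), IsProbabilityMeasure μ₀ →
      μ₀ ≪ volume → FiniteSecondMoment μ₀ →
      W2 (μ₀.map Tθ) (μ₀.map Tθ') = ENNReal.ofReal c) :
    ∀ ν₀ : Measure (EuclideanSpace ℝ (Fin m)), IsProbabilityMeasure ν₀ →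
      FiniteSecondMoment ν₀ →
      W2 (ν₀.map Tθ) (ν₀.map Tθ') = ENNReal.ofReal c :=
  wasserstein_transfer_ac_to_general_general L Tθ Tθ' hTθ hTθ' c h
end
end

section
/- Let μ ∈ 𝕎₂(ℝ^m) and let T : ℝ^m → ℝ^m be Lipschitz. Then the second moments of the pushforwards of the Gaussian mollifications converge to the second moment of the pushforward: ∫_{ℝ^m} |x|² d(T♯(μ∗g_σ))(x) → ∫_{ℝ^m} |x|² d(T♯μ)(x) as σ → 0. -/
/-!
For `σ > 0` the mollification `μ ∗ g_σ` is the law of `Y + σ Z`, where `Y ∼ μ` and `Z` is an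
independent standard Gaussian vector: `g_σ` is the density of the image of the standard Gaussian
under `z ↦ σ z`, as one sees on characteristic functions. Hence the second moment of
`T♯(μ ∗ g_σ)` is `E ‖T(Y + σ Z)‖²`. For `|σ| ≤ 1` the Lipschitz bound gives
`‖T(y + σ z)‖² ≤ 2 ‖T y‖² + 2 L² ‖z‖²`, which is integrable because `μ` and the Gaussian have
finite second moments, so dominated convergence lets `σ → 0`.
-/

open MeasureTheory Filter Set
open scoped ENNReal NNReal

noncomputable section

/-- The multivariate Gaussian density `g_σ(x) = (2πσ²)^{−m/2} exp(−|x|²/(2σ²))` on `ℝ^m`. -/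
noncomputable def gauss (m : ℕ) (σ : ℝ) (x : EuclideanSpace ℝ (Fin m)) : ℝ :=
  (2 * Real.pi * σ ^ 2) ^ (-(m : ℝ) / 2) * Real.exp (-‖x‖ ^ 2 / (2 * σ ^ 2))

/-- The convolution `μ∗g_σ` of a measure `μ` with the Gaussian of density `g_σ`: the
absolutely continuous measure with density `x ↦ ∫ g_σ(x−y) dμ(y)`. -/
noncomputable def mollify {m : ℕ} (σ : ℝ) (μ : Measure (EuclideanSpace ℝ (Fin m))) :
    Measure (EuclideanSpace ℝ (Fin m)) :=
  volume.withDensity fun x => ENNReal.ofReal (∫ y, gauss m σ (x - y) ∂μ)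

open ProbabilityTheory Topology

theorem MeasureTheory.Measure.conv_map_eq_map_prod {G : Type*} [AddMonoid G] [MeasurableSpace G]
    [MeasurableAdd₂ G] (μ ν : Measure G) [SFinite μ] [SFinite ν] {f : G → G}
    (hf : Measurable f) : μ ∗ ν.map f = (μ.prod ν).map fun p => p.1 + f p.2 := by
  have h := Measure.map_prod_map μ ν measurable_id hf
  rw [Measure.map_id] at h
  rw [Measure.conv, h, Measure.map_map measurable_add (measurable_id.prodMap hf)]
  rfl

theorem withDensity_integral_sub_eq_conv {G : Type*} [AddCommGroup G] [MeasurableSpace G]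
    [MeasurableAdd₂ G] [MeasurableNeg G] (ν : Measure G) [SFinite ν] [ν.IsAddLeftInvariant]
    (μ : Measure G) [SFinite μ] {g : G → ℝ} (hg : Measurable g) (hg0 : 0 ≤ g)
    (hgμ : ∀ x, Integrable (fun y => g (x - y)) μ) :
    ν.withDensity (fun x => ENNReal.ofReal (∫ y, g (x - y) ∂μ))
      = μ ∗ ν.withDensity fun z => ENNReal.ofReal (g z) := by
  have hρ : (fun x => ENNReal.ofReal (∫ y, g (x - y) ∂μ))
      = fun x => ∫⁻ y, ENNReal.ofReal (g (x - y)) ∂μ :=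
    funext fun x => ofReal_integral_eq_lintegral_ofReal (hgμ x) (ae_of_all _ fun y => hg0 (x - y))
  have hgm : Measurable fun p : G × G => ENNReal.ofReal (g (p.1 - p.2)) :=
    (hg.comp measurable_sub).ennreal_ofReal
  refine Measure.ext_of_lintegral _ fun φ hφ => ?_
  rw [hρ, lintegral_withDensity_eq_lintegral_mul _ hgm.lintegral_prod_right' hφ,
    Measure.lintegral_conv hφ]
  simp only [Pi.mul_apply]
  calc ∫⁻ x, (∫⁻ y, ENNReal.ofReal (g (x - y)) ∂μ) * φ x ∂ν
      = ∫⁻ x, ∫⁻ y, ENNReal.ofReal (g (x - y)) * φ x ∂μ ∂ν :=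
        lintegral_congr fun x => (lintegral_mul_const _ (hgm.comp measurable_prodMk_left)).symm
    _ = ∫⁻ y, ∫⁻ x, ENNReal.ofReal (g (x - y)) * φ x ∂ν ∂μ :=
        lintegral_lintegral_swap (hgm.mul (hφ.comp measurable_fst)).aemeasurable
    _ = ∫⁻ y, ∫⁻ z, φ (y + z) ∂ν.withDensity (fun z => ENNReal.ofReal (g z)) ∂μ := by
        refine lintegral_congr fun y => ?_
        rw [lintegral_withDensity_eq_lintegral_mul _ hg.ennreal_ofReal
          (by fun_prop : Measurable fun z => φ (y + z)), ← lintegral_add_left_eq_self _ y]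
        simp only [Pi.mul_apply, add_sub_cancel_left]

section Gaussian
open Complex
open scoped RealInnerProductSpace
variable {m : ℕ}

def gaussMeasure (m : ℕ) (σ : ℝ) : Measure (EuclideanSpace ℝ (Fin m)) :=
  volume.withDensity fun x => ENNReal.ofReal (gauss m σ x)

lemma gauss_nonneg (σ : ℝ) (x : EuclideanSpace ℝ (Fin m)) : 0 ≤ gauss m σ x := by
  unfold gauss; positivity

@[fun_prop]
lemma continuous_gauss (σ : ℝ) : Continuous (gauss m σ) := by
  unfold gauss; fun_prop

lemma gauss_le (σ : ℝ) (x : EuclideanSpace ℝ (Fin m)) :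
    gauss m σ x ≤ (2 * Real.pi * σ ^ 2) ^ (-(m : ℝ) / 2) :=
  mul_le_of_le_one_right (by positivity) (Real.exp_le_one_iff.2
    (div_nonpos_of_nonpos_of_nonneg (neg_nonpos.2 (by positivity)) (by positivity)))

lemma integrable_gauss {σ : ℝ} (hσ : σ ≠ 0) : Integrable (gauss m σ) := by
  have hb : 0 < ((2 * σ ^ 2)⁻¹ : ℂ).re := by
    norm_cast; positivity
  refine ((GaussianFourier.integrable_cexp_neg_mul_sq_norm_add hb 0
    (0 : EuclideanSpace ℝ (Fin m))).norm.const_mul ((2 * Real.pi * σ ^ 2) ^ (-(m : ℝ) / 2))).congr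
    (ae_of_all _ fun x => ?_)
  simp only [gauss, Complex.norm_exp, zero_mul, add_zero]
  rw [show -(2 * (σ : ℂ) ^ 2)⁻¹ * (‖x‖ : ℂ) ^ 2 = ((-‖x‖ ^ 2 / (2 * σ ^ 2) : ℝ) : ℂ) by
    push_cast; ring, ofReal_re]

lemma isFiniteMeasure_gaussMeasure {σ : ℝ} (hσ : σ ≠ 0) : IsFiniteMeasure (gaussMeasure m σ) :=
  isFiniteMeasure_withDensity_ofReal (integrable_gauss hσ).2

lemma charFun_gaussMeasure {σ : ℝ} (hσ : σ ≠ 0) (t : EuclideanSpace ℝ (Fin m)) :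
    charFun (gaussMeasure m σ) t = cexp (-‖σ • t‖ ^ 2 / 2) := by
  set a : ℝ := 2 * Real.pi * σ ^ 2 with ha_def
  have ha : 0 < a := by positivity
  have hb : 0 < ((2 * σ ^ 2)⁻¹ : ℂ).re := by
    norm_cast; positivity
  have hpt : ∀ x : EuclideanSpace ℝ (Fin m),
      (ENNReal.ofReal (gauss m σ x)).toReal • cexp (⟪x, t⟫ * I)
        = (a ^ (-(m : ℝ) / 2) : ℝ) * cexp (-(2 * (σ : ℂ) ^ 2)⁻¹ * ‖x‖ ^ 2 + I * ⟪t, x⟫) := by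
    intro x
    rw [ENNReal.toReal_ofReal (gauss_nonneg σ x), gauss, Complex.real_smul,
      ofReal_mul, ofReal_exp, mul_assoc, ← Complex.exp_add, real_inner_comm]
    congr 2
    push_cast
    ring
  have hconst : ((a ^ (-(m : ℝ) / 2) : ℝ) : ℂ)
      * ((Real.pi : ℂ) / (2 * (σ : ℂ) ^ 2)⁻¹) ^ ((m : ℂ) / 2) = 1 := by
    rw [show ((Real.pi : ℂ) / (2 * (σ : ℂ) ^ 2)⁻¹) = (a : ℂ) by push_cast [ha_def]; field_simp,
      show ((m : ℂ) / 2) = ((m / 2 : ℝ) : ℂ) by push_cast; ring, ← ofReal_cpow ha.le,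
      ← ofReal_mul, ← Real.rpow_add ha]
    simp [neg_div]
  have hnorm : (‖σ • t‖ : ℂ) ^ 2 = σ ^ 2 * ‖t‖ ^ 2 := by
    rw [← ofReal_pow, norm_smul, Real.norm_eq_abs, mul_pow, sq_abs]
    push_cast; rfl
  rw [charFun_apply, gaussMeasure, integral_withDensity_eq_integral_toReal_smul
    (continuous_gauss σ).measurable.ennreal_ofReal (ae_of_all _ fun _ => ENNReal.ofReal_lt_top),
    integral_congr_ae (ae_of_all _ hpt), integral_const_mul,
    GaussianFourier.integral_cexp_neg_mul_sq_norm_add hb I t, finrank_euclideanSpace_fin,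
    ← mul_assoc, hconst, one_mul, hnorm, I_sq]
  congr 1
  field_simp
  ring

lemma gaussMeasure_eq_map_smul {σ : ℝ} (hσ : σ ≠ 0) :
    gaussMeasure m σ = (stdGaussian (EuclideanSpace ℝ (Fin m))).map (σ • ·) := by
  have := isFiniteMeasure_gaussMeasure (m := m) hσ
  refine Measure.ext_of_charFun (funext fun t => ?_)
  rw [charFun_gaussMeasure hσ, charFun_map_smul, charFun_stdGaussian]

lemma mollify_eq_conv (σ : ℝ) (μ : Measure (EuclideanSpace ℝ (Fin m))) [IsFiniteMeasure μ] :
    mollify σ μ = μ ∗ gaussMeasure m σ :=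
  withDensity_integral_sub_eq_conv _ _ (continuous_gauss σ).measurable (gauss_nonneg σ)
    fun x => .of_bound (by fun_prop) _ (ae_of_all _ fun y => by
      rw [Real.norm_of_nonneg (gauss_nonneg σ _)]; exact gauss_le σ _)

lemma mollify_eq_map_prod {σ : ℝ} (hσ : σ ≠ 0) (μ : Measure (EuclideanSpace ℝ (Fin m)))
    [IsFiniteMeasure μ] :
    mollify σ μ = (μ.prod (stdGaussian _)).map fun p => p.1 + σ • p.2 := by
  rw [mollify_eq_conv, gaussMeasure_eq_map_smul hσ,
    Measure.conv_map_eq_map_prod _ _ (measurable_const_smul σ)]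

end Gaussian

section SecondMoment
variable {E F : Type*} [NormedAddCommGroup E] [NormedAddCommGroup F] {L : ℝ≥0} {T : E → F}

lemma LipschitzWith.norm_sq_add_le (hT : LipschitzWith L T) (y z : E) :
    ‖T (y + z)‖ ^ 2 ≤ 2 * ‖T y‖ ^ 2 + 2 * (L * ‖z‖) ^ 2 := by
  have h : ‖T (y + z)‖ ≤ ‖T y‖ + L * ‖z‖ := by
    have := hT.dist_le_mul (y + z) y
    rw [dist_eq_norm, dist_eq_norm, add_sub_cancel_left] at this
    linarith [norm_le_norm_add_norm_sub' (T (y + z)) (T y)]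
  nlinarith [sq_nonneg (‖T y‖ - L * ‖z‖), norm_nonneg (T (y + z))]

lemma FiniteSecondMoment.integrable_norm_sq {m : ℕ} {μ : Measure (EuclideanSpace ℝ (Fin m))}
    (h : FiniteSecondMoment μ) : Integrable (fun x => ‖x‖ ^ 2) μ :=
  ⟨by fun_prop, (hasFiniteIntegral_iff_ofReal (ae_of_all _ fun _ => by positivity)).2 h.lt_top⟩

variable [MeasurableSpace E]

lemma LipschitzWith.integrable_norm_sq_comp [OpensMeasurableSpace E] {μ : Measure E}
    [IsFiniteMeasure μ] (hT : LipschitzWith L T) (h : Integrable (fun x => ‖x‖ ^ 2) μ) :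
    Integrable (fun x => ‖T x‖ ^ 2) μ := by
  have := hT.continuous
  refine ((integrable_const (2 * ‖T 0‖ ^ 2)).add (h.const_mul (2 * L ^ 2))).mono'
    (by fun_prop : Continuous fun x => ‖T x‖ ^ 2).aestronglyMeasurable
    (ae_of_all _ fun x => ?_)
  simpa [mul_pow, mul_assoc] using hT.norm_sq_add_le 0 x

theorem tendsto_integral_norm_sq_comp_add_smul [NormedSpace ℝ E] [SecondCountableTopology E]
    [BorelSpace E] {μ ν : Measure E} [IsFiniteMeasure μ] [IsProbabilityMeasure ν]
    (hT : LipschitzWith L T) (hμ : Integrable (fun y => ‖T y‖ ^ 2) μ)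
    (hν : Integrable (fun z => ‖z‖ ^ 2) ν) :
    Tendsto (fun σ : ℝ => ∫ p, ‖T (p.1 + σ • p.2)‖ ^ 2 ∂(μ.prod ν)) (𝓝 0)
      (𝓝 (∫ y, ‖T y‖ ^ 2 ∂μ)) := by
  have := hT.continuous
  have hbound : ∀ σ : ℝ, ‖σ‖ ≤ 1 → ∀ p : E × E,
      ‖‖T (p.1 + σ • p.2)‖ ^ 2‖ ≤ 2 * ‖T p.1‖ ^ 2 + 2 * (L * ‖p.2‖) ^ 2 := fun σ hσ p => by
    rw [Real.norm_of_nonneg (by positivity)]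
    refine (hT.norm_sq_add_le _ _).trans ?_
    gcongr
    rw [norm_smul]
    exact mul_le_of_le_one_left (norm_nonneg _) hσ
  have hcont : ContinuousAt (fun σ : ℝ => ∫ p, ‖T (p.1 + σ • p.2)‖ ^ 2 ∂(μ.prod ν)) 0 := by
    refine continuousAt_of_dominated (.of_forall fun σ => by fun_prop)
      ?_ ((hμ.comp_fst ν).const_mul 2 |>.add ((hν.comp_snd μ).const_mul (2 * L ^ 2)))
      (ae_of_all _ fun p => by fun_prop)
    filter_upwards [Metric.closedBall_mem_nhds (0 : ℝ) one_pos] with σ hσ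
    exact ae_of_all _ fun p => by simpa [mul_pow, mul_assoc] using hbound σ (by simpa using hσ) p
  have hlim : ∫ p, ‖T p.1‖ ^ 2 ∂(μ.prod ν) = ∫ y, ‖T y‖ ^ 2 ∂μ := by
    simp [integral_fun_fst (fun y => ‖T y‖ ^ 2)]
  simpa [hlim] using hcont.tendsto

end SecondMoment

/-- For `μ ∈ 𝕎₂(ℝ^m)` and Lipschitz `T`, the second moments of the pushforwards
of the Gaussian mollifications converge to the second moment of the pushforward:
`∫ |x|² d(T♯(μ∗g_σ)) → ∫ |x|² d(T♯μ)` as `σ → 0⁺`. -/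
theorem second_moment_pushforward_mollify_tendsto {m : ℕ}
    (μ : Measure (EuclideanSpace ℝ (Fin m))) [IsProbabilityMeasure μ]
    (hmom : FiniteSecondMoment μ)
    (L : ℝ≥0) (T : EuclideanSpace ℝ (Fin m) → EuclideanSpace ℝ (Fin m))
    (hT : LipschitzWith L T) :
    Filter.Tendsto (fun σ : ℝ => ∫ x, ‖x‖ ^ 2 ∂((mollify σ μ).map T))
      (nhdsWithin 0 (Set.Ioi 0)) (nhds (∫ x, ‖x‖ ^ 2 ∂(μ.map T))) := by
  have := hT.continuous
  have hlim := tendsto_integral_norm_sq_comp_add_smul hT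
    (hT.integrable_norm_sq_comp hmom.integrable_norm_sq)
    (IsGaussian.memLp_two_id.integrable_norm_pow' (μ := stdGaussian (EuclideanSpace ℝ (Fin m))))
  rw [integral_map (by fun_prop) (by fun_prop)]
  refine (hlim.mono_left nhdsWithin_le_nhds).congr' (eventually_nhdsWithin_of_forall fun σ hσ => ?_)
  dsimp only
  rw [integral_map (by fun_prop) (by fun_prop), mollify_eq_map_prod (ne_of_gt hσ),
    integral_map (by fun_prop) (by fun_prop)]
end
end

section
/- Let D ∈ ℝ^{N×N} be a distance matrix (D = Dᵀ, D_{ii} = 0 for all i, D_{ij} ≥ 0 for all i ≠ j), let S ∈ ℝ^{N×N} be the entrywise square S_{ij} = D_{ij}², let H = I − (1/N)𝟙𝟙ᵀ be the centering matrix (𝟙 the all-ones vector), and let B = −(1/2) H S H. Then D is a Euclidean distance matrix — i.e., there exist points z₁,…,z_N ∈ ℝ^d for some d with D_{ij} = |zᵢ − zⱼ| for all i, j — if and only if B is symmetric positive semidefinite. -/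
open Matrix

noncomputable section

/-! Expanding ‖zᵢ − zⱼ‖² = ‖zᵢ‖² + ‖zⱼ‖² − 2⟪zᵢ, zⱼ⟫ writes the squared-distance matrix as
r𝟙ᵀ + 𝟙rᵀ − 2G, with G the Gram matrix of the points. Since H𝟙 = 0, double centering kills the
rank-one terms, so B = HGH is positive semidefinite. Conversely, a positive semidefinite B is the
Gram matrix of some points zᵢ; as H fixes eᵢ − eⱼ, testing B on that vector gives
‖zᵢ − zⱼ‖² = −½ (eᵢ − eⱼ)ᵀ S (eᵢ − eⱼ) = Dᵢⱼ². -/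

namespace Matrix

variable {ι E : Type*} [NormedAddCommGroup E] [InnerProductSpace ℝ E]

def sqDistMatrix (z : ι → E) : Matrix ι ι ℝ :=
  of fun i j => ‖z i - z j‖ ^ 2

lemma sqDistMatrix_eq (z : ι → E) :
    sqDistMatrix z =
      vecMulVec (fun i => ‖z i‖ ^ 2) 1 + vecMulVec 1 (fun i => ‖z i‖ ^ 2) - (2 : ℝ) • gram ℝ z := by
  ext i j
  simp [sqDistMatrix, norm_sub_sq_real]
  ring

variable [Fintype ι] [DecidableEq ι]

variable (ι) in
def centeringMatrix : Matrix ι ι ℝ :=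
  1 - (Fintype.card ι : ℝ)⁻¹ • of fun _ _ => 1

lemma centeringMatrix_mulVec_apply (v : ι → ℝ) (i : ι) :
    (centeringMatrix ι *ᵥ v) i = v i - (Fintype.card ι : ℝ)⁻¹ * ∑ j, v j := by
  rw [centeringMatrix, sub_mulVec, one_mulVec, smul_mulVec]
  simp [mulVec, dotProduct]

lemma transpose_centeringMatrix : (centeringMatrix ι)ᵀ = centeringMatrix ι := by
  ext i j
  simp [centeringMatrix, one_apply, eq_comm]

lemma vecMul_centeringMatrix (v : ι → ℝ) : v ᵥ* centeringMatrix ι = centeringMatrix ι *ᵥ v := by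
  rw [← vecMul_transpose, transpose_centeringMatrix]

lemma centeringMatrix_mulVec_one : centeringMatrix ι *ᵥ 1 = 0 := by
  ext i
  have : (Fintype.card ι : ℝ) ≠ 0 := by
    have : Nonempty ι := ⟨i⟩
    positivity
  simp [centeringMatrix_mulVec_apply, this]

lemma centeringMatrix_mulVec_of_sum_eq_zero {w : ι → ℝ} (hw : ∑ i, w i = 0) :
    centeringMatrix ι *ᵥ w = w := by
  ext i
  simp [centeringMatrix_mulVec_apply, hw]

lemma dotProduct_centeringMatrix_mul_mul_mulVec (M : Matrix ι ι ℝ) {w : ι → ℝ}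
    (hw : ∑ i, w i = 0) :
    w ⬝ᵥ (centeringMatrix ι * M * centeringMatrix ι) *ᵥ w = w ⬝ᵥ M *ᵥ w := by
  rw [← mulVec_mulVec, ← mulVec_mulVec, centeringMatrix_mulVec_of_sum_eq_zero hw,
    dotProduct_mulVec, vecMul_centeringMatrix, centeringMatrix_mulVec_of_sum_eq_zero hw]

lemma single_sub_single_dotProduct_mulVec {R : Type*} [CommRing R] (M : Matrix ι ι R) (i j : ι) :
    (Pi.single i 1 - Pi.single j 1) ⬝ᵥ M *ᵥ (Pi.single i 1 - Pi.single j 1) =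
      M i i - M i j - M j i + M j j := by
  simp [mulVec_sub, sub_dotProduct, dotProduct_sub]
  ring

lemma neg_half_smul_centeringMatrix_mul_sqDistMatrix_mul (z : ι → E) :
    (-(1 / 2 : ℝ)) • (centeringMatrix ι * sqDistMatrix z * centeringMatrix ι) =
      (centeringMatrix ι)ᴴ * gram ℝ z * centeringMatrix ι := by
  rw [conjTranspose_eq_transpose_of_trivial, transpose_centeringMatrix, sqDistMatrix_eq]
  set H := centeringMatrix ι
  set r : ι → ℝ := fun i => ‖z i‖ ^ 2
  have hleft : H * vecMulVec 1 r = 0 := by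
    rw [mul_vecMulVec, centeringMatrix_mulVec_one, zero_vecMulVec]
  have hright : vecMulVec r 1 * H = 0 := by
    rw [vecMulVec_mul, vecMul_centeringMatrix, centeringMatrix_mulVec_one, vecMulVec_zero]
  rw [Matrix.mul_sub, Matrix.mul_add, Matrix.sub_mul, Matrix.add_mul, hleft, Matrix.mul_assoc H,
    hright]
  simp only [Matrix.mul_zero, Matrix.zero_mul, add_zero, zero_sub, Matrix.mul_smul,
    Matrix.smul_mul, smul_neg, smul_smul]
  norm_num

lemma norm_sub_sq_of_gram_eq {S : Matrix ι ι ℝ} (hS : S.IsSymm) (hS₀ : ∀ i, S i i = 0)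
    {z : ι → E} (hz : gram ℝ z = (-(1 / 2 : ℝ)) • (centeringMatrix ι * S * centeringMatrix ι))
    (i j : ι) : ‖z i - z j‖ ^ 2 = S i j := by
  set w : ι → ℝ := Pi.single i 1 - Pi.single j 1
  have hw : ∑ k, w k = 0 := by simp [w, Finset.sum_sub_distrib]
  calc ‖z i - z j‖ ^ 2 = star w ⬝ᵥ gram ℝ z *ᵥ w := by
        rw [star_dotProduct_gram_mulVec]
        simp [w, sub_smul, Finset.sum_sub_distrib, Pi.single_apply]
    _ = -(1 / 2) * (w ⬝ᵥ S *ᵥ w) := by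
        rw [hz, star_trivial, smul_mulVec, dotProduct_smul,
          dotProduct_centeringMatrix_mul_mul_mulVec S hw, smul_eq_mul]
    _ = S i j := by
        rw [single_sub_single_dotProduct_mulVec, hS₀, hS₀, hS.apply]
        ring

open scoped ComplexOrder in
lemma PosSemidef.exists_eq_gram {𝕜 : Type*} [RCLike 𝕜] {A : Matrix ι ι 𝕜} (hA : A.PosSemidef) :
    ∃ z : ι → EuclideanSpace 𝕜 ι, A = gram 𝕜 z := by
  open scoped MatrixOrder in
  obtain ⟨X, rfl⟩ := CStarAlgebra.nonneg_iff_eq_star_mul_self.mp hA.nonneg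
  refine ⟨fun i => WithLp.toLp 2 fun k => X k i, ?_⟩
  ext i j
  simp [mul_apply, PiLp.inner_apply, mul_comm]

end Matrix

/-- (Classical MDS / Schoenberg.) Let `D` be an `N × N` distance matrix, let
`S` be its entrywise square, let `H = I − (1/N)𝟙𝟙ᵀ` be the centering matrix, and let
`B = −(1/2) H S H`. Then `D` is a Euclidean distance matrix — i.e., there exist points
`z₁,…,z_N ∈ ℝ^d` for some `d` with `D i j = |zᵢ − zⱼ|` — iff `B` is positive semidefinite. -/
theorem distance_matrix_euclidean_iff_posSemidef {N : ℕ}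
    (D : Matrix (Fin N) (Fin N) ℝ)
    (hsymm : D.IsSymm) (hdiag : ∀ i, D i i = 0)
    (hnonneg : ∀ i j, i ≠ j → 0 ≤ D i j)
    (S : Matrix (Fin N) (Fin N) ℝ) (hS : S = Matrix.of fun i j => (D i j) ^ 2)
    (H : Matrix (Fin N) (Fin N) ℝ)
    (hH : H = 1 - ((N : ℝ))⁻¹ • Matrix.of (fun _ _ => (1 : ℝ)))
    (B : Matrix (Fin N) (Fin N) ℝ) (hB : B = (-(1 / 2 : ℝ)) • (H * S * H)) :
    (∃ d : ℕ, ∃ z : Fin N → EuclideanSpace ℝ (Fin d), ∀ i j, D i j = ‖z i - z j‖) ↔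
      B.PosSemidef := by
  have hH : H = centeringMatrix (Fin N) := by rw [hH, centeringMatrix, Fintype.card_fin]
  subst hB hH
  constructor
  · rintro ⟨d, z, hz⟩
    have hS : S = sqDistMatrix z := by ext i j; simp [hS, sqDistMatrix, hz]
    rw [hS, neg_half_smul_centeringMatrix_mul_sqDistMatrix_mul]
    exact (posSemidef_gram ℝ z).conjTranspose_mul_mul_same _
  · intro hB
    obtain ⟨z, hz⟩ := hB.exists_eq_gram
    have hSsymm : S.IsSymm := by
      ext i j
      simp [hS, hsymm.apply i j]
    refine ⟨N, z, fun i j => ?_⟩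
    have hDij : 0 ≤ D i j := by
      rcases eq_or_ne i j with rfl | hij
      · exact (hdiag i).ge
      · exact hnonneg i j hij
    have hsq := norm_sub_sq_of_gram_eq hSsymm (by simp [hS, hdiag]) hz.symm i j
    rw [hS, of_apply] at hsq
    exact (sq_eq_sq₀ hDij (norm_nonneg _)).mp hsq.symm

end
end
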